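/- arXiv:1704.02020 — 4 statements merged into one kernel-verified Lean document; each statement's English description precedes it below -/
import Mathlib

section
/- Let C be a chain complex over 𝔽₂[U] that splits as C = C_even ⊕ C_odd, where the differential ∂ vanishes on C_even, maps C_odd into C_even, and is injective on C_odd. If J and J₀ are two chain maps on C that preserve the splitting and induce the same map on homology, then J and J₀ are chain homotopic. -/
open Polynomial

abbrev F2 : Type := ZMod 2
abbrev F2U : Type := Polynomial F2

/-- Let `C = C_even ⊕ C_odd` be a chain complex over `𝔽₂[U]` whose
differential vanishes on the even part, maps the odd part into the even part, and is
injective on the odd part.  If `J` and `J₀` are two chain maps on `C` preserving the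
splitting (with even components `JE, J0E` and odd components `JO, J0O`) which induce the
same map on homology, then `J` and `J₀` are chain homotopic: there is an `𝔽₂[U]`-linear
map `H : C_even → C_odd` (extended by zero on the odd part) with
`J + J₀ = ∂H + H∂`. -/
theorem chain_maps_agreeing_on_homology_are_homotopic
    (E O : Type) [AddCommGroup E] [AddCommGroup O] [Module F2U E] [Module F2U O]
    (d : O →ₗ[F2U] E) (hdinj : Function.Injective d)
    (JE J0E : E →ₗ[F2U] E) (JO J0O : O →ₗ[F2U] O)
    (hJchain : d ∘ₗ JO = JE ∘ₗ d) (hJ0chain : d ∘ₗ J0O = J0E ∘ₗ d)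
    (hhomology : ∀ e : E, JE e + J0E e ∈ LinearMap.range d) :
    ∃ H : E →ₗ[F2U] O,
      (∀ e : E, JE e + J0E e = d (H e)) ∧
      (∀ o : O, JO o + J0O o = H (d o)) := by
  set eq := LinearEquiv.ofInjective d hdinj
  set f : E →ₗ[F2U] LinearMap.range d :=
    (JE + J0E).codRestrict (LinearMap.range d) (fun e => hhomology e)
  have key : ∀ x : LinearMap.range d, d (eq.symm x) = (x : E) := by
    intro x
    rw [← LinearEquiv.ofInjective_apply d (h := hdinj), LinearEquiv.apply_symm_apply]
  refine ⟨(eq.symm : LinearMap.range d →ₗ[F2U] O) ∘ₗ f, ?_, ?_⟩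
  · intro e
    simp only [LinearMap.comp_apply, LinearEquiv.coe_coe]
    exact (key (f e)).symm
  · intro o
    apply hdinj
    simp only [LinearMap.comp_apply, LinearEquiv.coe_coe]
    rw [key (f (d o))]
    have h3 : d (JO o + J0O o) = JE (d o) + J0E (d o) := by
      have e1 := congrArg (fun g => g o) hJchain
      have e2 := congrArg (fun g => g o) hJ0chain
      simp only [LinearMap.comp_apply] at e1 e2
      simp [map_add, e1, e2]
    exact h3
end

section
/- Let R be a graded root with leaves v₁,…,vₙ in left-to-right order and angles α₁,…,α_{n-1}, and let C_*(R) be the associated standard complex over 𝔽₂[U]: a free module with even generators v_i in degree gr(v_i), odd generators α_i in degree gr(α_i)+1, zero differential on even generators, and ∂α_i = U^{(gr(v_i)-gr(α_i))/2} v_i + U^{(gr(v_{i+1})-gr(α_i))/2} v_{i+1}. Then the homology H_*(C_*(R)) is isomorphic as a graded 𝔽₂[U]-module to the lattice homology 𝕙⁻(R) of the graded root. -/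
open Polynomial

noncomputable section

/-- Homology of a module endomorphism viewed as a differential. -/
abbrev Hmlgy {M : Type} [AddCommGroup M] [Module F2U M] (f : M →ₗ[F2U] M) : Type :=
  ↥(LinearMap.ker f) ⧸ (LinearMap.range f).comap (LinearMap.ker f).subtype

/-- Combinatorial data of a graded root: `N ≥ 1` leaves with (Maslov) gradings
`h 0, …, h (N-1)` listed in left-to-right order, and angle (merge) gradings
`m 0, …, m (N-2)`, where `m i` is the grading of the vertex supporting the angle
between the paths from the leaves `i` and `i+1` down the infinite stem.  The angle
gradings are strictly smaller than the adjacent leaf gradings and differ from them by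
even integers.  (Such data determines a graded root uniquely, and any graded root with
ordered leaves arises this way.) -/
structure GRoot where
  N : ℕ
  hN : 0 < N
  h : ℕ → ℚ
  m : ℕ → ℚ
  hm : ∀ i : ℕ, i + 1 < N → m i < h i ∧ m i < h (i + 1)
  par : ∀ i : ℕ, i + 1 < N →
    (∃ k : ℤ, h i - m i = 2 * k) ∧ (∃ k : ℤ, h (i + 1) - m i = 2 * k)

namespace GRoot

variable (R : GRoot)

/-- Pairs `(i, g)`: the vertex of grading `g` on the path from leaf `i` down the stem. -/
def Carrier : Type :=
  {p : ℕ × ℚ // p.1 < R.N ∧ p.2 ≤ R.h p.1 ∧ ∃ k : ℤ, R.h p.1 - p.2 = 2 * k}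

/-- `(i, g)` and `(j, g')` represent the same vertex of the graded root iff `g = g'` and
the paths from leaves `i` and `j` have already merged at grading `g`, i.e. `g ≤ m k` for
every angle `k` between `i` and `j`. -/
def rel (a b : R.Carrier) : Prop :=
  a.val.2 = b.val.2 ∧
    ∀ k : ℕ, min a.val.1 b.val.1 ≤ k → k < max a.val.1 b.val.1 → a.val.2 ≤ R.m k

/-- The vertex set of the graded root. -/
def Vertex : Type := Quot R.rel

/-- Going one step down a path: `(i, g) ↦ (i, g - 2)`. -/
def downC (p : R.Carrier) : R.Carrier :=
  ⟨(p.val.1, p.val.2 - 2), p.prop.1,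
    by show p.val.2 - 2 ≤ R.h p.val.1; have := p.prop.2.1; linarith,
    by obtain ⟨k, hk⟩ := p.prop.2.2
       refine ⟨k + 1, ?_⟩
       show R.h p.val.1 - (p.val.2 - 2) = 2 * (((k + 1 : ℤ) : ℚ))
       push_cast at hk ⊢; linarith⟩

/-- The `U`-action on vertices: each vertex is sent to the unique vertex below it. -/
def down : R.Vertex → R.Vertex :=
  Quot.map R.downC (by
    rintro a b ⟨h1, h2⟩
    constructor
    · simp only [downC, h1]
    · intro k hk1 hk2
      simp only [downC] at hk1 hk2 ⊢
      have := h2 k hk1 hk2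
      linarith)

/-- The lattice homology `𝕙⁻(R)`: one `𝔽₂`-generator for each vertex, with the
`U`-action given by `Finsupp.mapDomain R.down`. -/
abbrev LH : Type := R.Vertex →₀ F2

/-- The differential of the standard complex associated to the graded root:
`∂ αᵢ = U^{(h i − m i)/2} vᵢ + U^{(h (i+1) − m i)/2} vᵢ₊₁`. -/
def bdry : (Fin (R.N - 1) → F2U) →ₗ[F2U] (Fin R.N → F2U) :=
  ∑ i : Fin (R.N - 1),
    (LinearMap.proj i : (Fin (R.N - 1) → F2U) →ₗ[F2U] F2U).smulRight
      (Pi.single (⟨i.val, by have := i.isLt; omega⟩ : Fin R.N)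
          ((X : F2U) ^ (⌊(R.h i.val - R.m i.val) / 2⌋).toNat)
        + Pi.single (⟨i.val + 1, by have := i.isLt; omega⟩ : Fin R.N)
          ((X : F2U) ^ (⌊(R.h (i.val + 1) - R.m i.val) / 2⌋).toNat))

/-- The full differential of the standard complex `C_*(R)`, on even ⊕ odd chains. -/
def Dstd : ((Fin R.N → F2U) × (Fin (R.N - 1) → F2U)) →ₗ[F2U]
    ((Fin R.N → F2U) × (Fin (R.N - 1) → F2U)) :=
  (R.bdry ∘ₗ LinearMap.snd F2U (Fin R.N → F2U) (Fin (R.N - 1) → F2U)).prod 0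

end GRoot
namespace GRoot

variable (R : GRoot)

lemma rel_equiv : Equivalence R.rel := by
  constructor
  · intro a; exact ⟨rfl, fun k hk1 hk2 => by omega⟩
  · rintro a b ⟨h1, h2⟩
    exact ⟨h1.symm, fun k hk1 hk2 => h1 ▸ h2 k (by omega) (by omega)⟩
  · rintro a b c ⟨h1, h2⟩ ⟨h3, h4⟩
    refine ⟨h1.trans h3, fun k hk1 hk2 => ?_⟩
    rcases (by omega : (min a.val.1 b.val.1 ≤ k ∧ k < max a.val.1 b.val.1) ∨
        (min b.val.1 c.val.1 ≤ k ∧ k < max b.val.1 c.val.1)) with ⟨u, v⟩ | ⟨u, v⟩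
    · exact h2 k u v
    · exact h1 ▸ h4 k u v

lemma mk_eq_mk {a b : R.Carrier} : Quot.mk R.rel a = Quot.mk R.rel b ↔ R.rel a b := by
  rw [Quot.eq, (R.rel_equiv).eqvGen_iff]

/-- The vertex `(i, h i - 2k)`. -/
def vtx (i : Fin R.N) (k : ℕ) : R.Vertex :=
  Quot.mk R.rel ⟨(i.val, R.h i.val - 2 * k), i.isLt, by simp [sub_le_iff_le_add],
    ⟨k, by push_cast; ring⟩⟩

lemma down_vtx (i : Fin R.N) (k : ℕ) : R.down (R.vtx i k) = R.vtx i (k + 1) := by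
  show Quot.mk _ (R.downC _) = _
  refine congrArg _ (Subtype.ext ?_)
  show (i.val, R.h i.val - 2 * (k:ℚ) - 2) = (i.val, R.h i.val - 2 * ((k:ℕ)+1 : ℕ))
  push_cast
  exact Prod.ext rfl (by ring)

/-- The `U`-action on lattice homology as an `F2`-linear endomorphism. -/
def dlin : R.LH →ₗ[F2] R.LH := Finsupp.lmapDomain F2 F2 R.down

lemma dlin_single (w : R.Vertex) (c : F2) :
    R.dlin (Finsupp.single w c) = Finsupp.single (R.down w) c := by
  simp [dlin, Finsupp.mapDomain_single]

lemma dlin_pow_single (i : Fin R.N) (k n : ℕ) (c : F2) :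
    (R.dlin ^ n) (Finsupp.single (R.vtx i k) c) = Finsupp.single (R.vtx i (k + n)) c := by
  induction n generalizing k with
  | zero => rfl
  | succ n ih =>
    rw [pow_succ, Module.End.mul_apply, dlin_single, down_vtx, ih,
      show k + 1 + n = k + (n + 1) from by omega]

/-- The chain-level comparison map to the `F2U`-module `AEval' dlin`. -/
def ψ : (Fin R.N → F2U) →ₗ[F2U] Module.AEval' R.dlin :=
  LinearMap.lsum F2U _ F2U fun i =>
    LinearMap.toSpanSingleton F2U _ (Module.AEval'.of R.dlin (Finsupp.single (R.vtx i 0) 1))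

lemma of_symm_ψ (x : Fin R.N → F2U) :
    (Module.AEval'.of R.dlin).symm (R.ψ x) =
      ∑ i : Fin R.N, (x i).sum fun k c => Finsupp.single (R.vtx i k) c := by
  rw [ψ, LinearMap.lsum_apply]
  rw [LinearMap.sum_apply, map_sum]
  refine Finset.sum_congr rfl fun i _ => ?_
  rw [LinearMap.comp_apply, LinearMap.proj_apply, LinearMap.toSpanSingleton_apply, Module.AEval.of_symm_smul,
    LinearEquiv.symm_apply_apply, Module.End.smul_def, Polynomial.aeval_endomorphism,
    Polynomial.sum_def, Polynomial.sum_def]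
  refine Finset.sum_congr rfl fun n _ => ?_
  rw [dlin_pow_single, Finsupp.smul_single, zero_add, smul_eq_mul, mul_one]

lemma ψ_single (i : Fin R.N) (k : ℕ) :
    R.ψ (Pi.single i ((X : F2U) ^ k)) =
      Module.AEval'.of R.dlin (Finsupp.single (R.vtx i k) 1) := by
  apply (Module.AEval'.of R.dlin).symm.injective
  rw [of_symm_ψ, LinearEquiv.symm_apply_apply]
  rw [Finset.sum_eq_single i]
  · rw [Pi.single_eq_same, Polynomial.X_pow_eq_monomial, Polynomial.sum_monomial_index]
    simp
  · intro j _ hj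
    rw [Pi.single_eq_of_ne hj, Polynomial.sum_zero_index]
  · intro hi; exact absurd (Finset.mem_univ i) hi

/-- Exponent of `U` from leaf `t` to the angle vertex at `t`. -/
def ea (t : ℕ) : ℕ := (⌊(R.h t - R.m t) / 2⌋).toNat

/-- Exponent of `U` from leaf `t+1` to the angle vertex at `t`. -/
def eb (t : ℕ) : ℕ := (⌊(R.h (t + 1) - R.m t) / 2⌋).toNat

lemma floor_key {x y : ℚ} (hlt : y < x) (hpar : ∃ k : ℤ, x - y = 2 * k) :
    x - y = 2 * (((⌊(x - y) / 2⌋).toNat : ℚ)) := by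
  obtain ⟨k, hk⟩ := hpar
  have h2 : (x - y) / 2 = (k : ℚ) := by rw [hk]; ring
  have h3 : ⌊(x - y) / 2⌋ = k := by rw [h2, Int.floor_intCast]
  have hk0 : 0 ≤ k := by
    by_contra hneg
    push_neg at hneg
    have : (k : ℚ) < 0 := by exact_mod_cast hneg
    nlinarith
  rw [h3]
  have h4 : ((k.toNat : ℕ) : ℚ) = (k : ℚ) := by
    exact_mod_cast congrArg (fun z : ℤ => (z : ℚ)) (Int.toNat_of_nonneg hk0)
  rw [h4]
  linarith

lemma ea_spec (t : ℕ) (ht : t + 1 < R.N) : R.h t - R.m t = 2 * (R.ea t : ℚ) :=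
  floor_key (R.hm t ht).1 (R.par t ht).1

lemma eb_spec (t : ℕ) (ht : t + 1 < R.N) : R.h (t + 1) - R.m t = 2 * (R.eb t : ℚ) :=
  floor_key (R.hm t ht).2 (R.par t ht).2

lemma bdry_single (t : Fin (R.N - 1)) (p : F2U) :
    R.bdry (Pi.single t p) =
      Pi.single (⟨t.val, by have := t.isLt; omega⟩ : Fin R.N) (p * X ^ R.ea t.val)
        + Pi.single (⟨t.val + 1, by have := t.isLt; omega⟩ : Fin R.N) (p * X ^ R.eb t.val) := by
  rw [bdry, LinearMap.sum_apply]
  rw [Finset.sum_eq_single t]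
  · rw [LinearMap.smulRight_apply, LinearMap.proj_apply, Pi.single_eq_same, smul_add]
    rw [← Pi.single_smul, ← Pi.single_smul]
    rfl
  · intro j _ hj
    rw [LinearMap.smulRight_apply, LinearMap.proj_apply, Pi.single_eq_of_ne hj, zero_smul]
  · intro hi; exact absurd (Finset.mem_univ t) hi

lemma vtx_angle (t : Fin (R.N - 1)) :
    R.vtx (⟨t.val, by have := t.isLt; omega⟩ : Fin R.N) (R.ea t.val)
      = R.vtx (⟨t.val + 1, by have := t.isLt; omega⟩ : Fin R.N) (R.eb t.val) := by
  have ht : t.val + 1 < R.N := by have := t.isLt; omega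
  have ha := R.ea_spec t.val ht
  have hb := R.eb_spec t.val ht
  refine R.mk_eq_mk.mpr ⟨?_, ?_⟩
  · show R.h t.val - 2 * (R.ea t.val : ℚ) = R.h (t.val + 1) - 2 * (R.eb t.val : ℚ)
    linarith
  · intro s hs1 hs2
    simp only [min_def, max_def] at hs1 hs2
    have hst : s = t.val := by split_ifs at hs1 hs2 <;> omega
    subst hst
    show R.h t.val - 2 * (R.ea t.val : ℚ) ≤ R.m t.val
    linarith
lemma F2U_two : (2 : F2U) = 0 := by
  rw [← map_ofNat (Polynomial.C) 2, show (2 : F2) = 0 from by decide, map_zero]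

lemma F2U_add_self (p : F2U) : p + p = 0 := by
  rw [← two_mul, F2U_two, zero_mul]

lemma pi_add_self (x : Fin R.N → F2U) : x + x = 0 := by
  funext j; exact F2U_add_self (x j)

lemma LH_single_add_self (w : R.Vertex) : (Finsupp.single w 1 + Finsupp.single w 1 : R.LH) = 0 := by
  rw [← Finsupp.single_add, show (1 : F2) + 1 = 0 from by decide, Finsupp.single_zero]

lemma step_mem (t : Fin (R.N - 1)) (e : ℕ) :
    Pi.single (⟨t.val, by have := t.isLt; omega⟩ : Fin R.N) ((X : F2U) ^ (e + R.ea t.val))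
      + Pi.single (⟨t.val + 1, by have := t.isLt; omega⟩ : Fin R.N) ((X : F2U) ^ (e + R.eb t.val))
      ∈ LinearMap.range R.bdry := by
  refine ⟨Pi.single t ((X : F2U) ^ e), ?_⟩
  rw [bdry_single, ← pow_add, ← pow_add]

lemma pair_mem_of_le : ∀ (d : ℕ) (i j : Fin R.N) (k l : ℕ), j.val = i.val + d →
    R.vtx i k = R.vtx j l →
    Pi.single i ((X : F2U) ^ k) + Pi.single j ((X : F2U) ^ l)
      ∈ LinearMap.range R.bdry := by
  intro d
  induction d with
  | zero =>
    intro i j k l hj hv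
    have hij : i = j := Fin.ext (by omega)
    subst hij
    obtain ⟨h1, _⟩ := R.mk_eq_mk.mp hv
    have hkl : (k : ℚ) = l := by
      have : R.h i.val - 2 * (k : ℚ) = R.h i.val - 2 * (l : ℚ) := h1
      linarith
    have : k = l := Nat.cast_injective hkl
    subst this
    rw [pi_add_self]
    exact zero_mem _
  | succ d ih =>
    intro i j k l hj hv
    obtain ⟨h1, h2⟩ := R.mk_eq_mk.mp hv
    have h1' : R.h i.val - 2 * (k : ℚ) = R.h j.val - 2 * (l : ℚ) := h1
    have h2x : ∀ s : ℕ, min i.val j.val ≤ s → s < max i.val j.val →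
        R.h i.val - 2 * (k : ℚ) ≤ R.m s := h2
    have hiN : i.val + 1 < R.N := by have := j.isLt; omega
    have htlt : i.val < R.N - 1 := by omega
    have hmi : R.h i.val - 2 * (k : ℚ) ≤ R.m i.val := h2x i.val (by omega) (by omega)
    have ha := R.ea_spec i.val hiN
    have hb := R.eb_spec i.val hiN
    have hak : R.ea i.val ≤ k := by
      by_contra hcon
      push_neg at hcon
      have : (k : ℚ) < R.ea i.val := by exact_mod_cast hcon
      linarith
    set e := k - R.ea i.val with he
    have hek : e + R.ea i.val = k := by omega
    set k' := e + R.eb i.val with hk'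
    have heq : (e : ℚ) + R.ea i.val = k := by exact_mod_cast congrArg (Nat.cast (R := ℚ)) hek
    have hg' : R.h (i.val + 1) - 2 * (k' : ℚ) = R.h i.val - 2 * (k : ℚ) := by
      have : (k' : ℚ) = e + R.eb i.val := by push_cast [hk']; ring
      rw [this]; linarith
    have hstep := R.step_mem ⟨i.val, htlt⟩ e
    rw [hek] at hstep
    have hfin : (⟨i.val, by omega⟩ : Fin R.N) = i := Fin.ext rfl
    rw [hfin] at hstep
    have hv' : R.vtx ⟨i.val + 1, hiN⟩ k' = R.vtx j l := by
      refine R.mk_eq_mk.mpr ⟨?_, ?_⟩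
      · show R.h (i.val + 1) - 2 * (k' : ℚ) = R.h j.val - 2 * (l : ℚ)
        rw [hg', h1']
      · intro s hs1 hs2
        have hs1' : min (i.val + 1) j.val ≤ s := hs1
        have hs2' : s < max (i.val + 1) j.val := hs2
        show R.h (i.val + 1) - 2 * (k' : ℚ) ≤ R.m s
        rw [hg']
        exact h2x s (by omega) (by omega)
    have hrec := ih ⟨i.val + 1, hiN⟩ j k' l (by simp; omega) hv'
    have hsum := add_mem hstep hrec
    have hBB := R.pi_add_self (Pi.single (⟨i.val + 1, hiN⟩ : Fin R.N) ((X : F2U) ^ k'))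
    have key : (Pi.single (⟨i.val + 1, hiN⟩ : Fin R.N) ((X : F2U) ^ k') : Fin R.N → F2U)
        + ((Pi.single (⟨i.val + 1, hiN⟩ : Fin R.N) ((X : F2U) ^ k') : Fin R.N → F2U)
          + (Pi.single j ((X : F2U) ^ l) : Fin R.N → F2U))
        = (Pi.single j ((X : F2U) ^ l) : Fin R.N → F2U) := by
      rw [← add_assoc, hBB, zero_add]
    have hsum' : ((Pi.single i ((X : F2U) ^ k) : Fin R.N → F2U)
        + (Pi.single (⟨i.val + 1, hiN⟩ : Fin R.N) ((X : F2U) ^ k') : Fin R.N → F2U))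
          + ((Pi.single (⟨i.val + 1, hiN⟩ : Fin R.N) ((X : F2U) ^ k') : Fin R.N → F2U)
            + (Pi.single j ((X : F2U) ^ l) : Fin R.N → F2U)) ∈ LinearMap.range R.bdry := hsum
    rw [add_assoc, key] at hsum'
    exact hsum'

lemma pair_mem (i j : Fin R.N) (k l : ℕ) (hv : R.vtx i k = R.vtx j l) :
    Pi.single i ((X : F2U) ^ k) + Pi.single j ((X : F2U) ^ l)
      ∈ LinearMap.range R.bdry := by
  rcases le_or_gt i.val j.val with hle | hlt
  · exact R.pair_mem_of_le (j.val - i.val) i j k l (by omega) hv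
  · rw [add_comm]
    exact R.pair_mem_of_le (i.val - j.val) j i l k (by omega) hv.symm

lemma ψ_bdry (y : Fin (R.N - 1) → F2U) : R.ψ (R.bdry y) = 0 := by
  have hy : y = ∑ t : Fin (R.N - 1), Pi.single t (y t) := by
    rw [Finset.univ_sum_single]
  rw [hy, map_sum, map_sum]
  refine Finset.sum_eq_zero fun t _ => ?_
  rw [bdry_single, ← smul_eq_mul, ← smul_eq_mul, Pi.single_smul, Pi.single_smul,
    map_add, map_smul, map_smul, ψ_single, ψ_single, vtx_angle, ← smul_add,
    ← map_add, LH_single_add_self, map_zero, smul_zero]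
lemma ψ_single_mem (w : R.Vertex) (c : F2) :
    ∃ x, R.ψ x = Module.AEval'.of R.dlin (Finsupp.single w c) := by
  rcases (show c = 0 ∨ c = 1 by revert c; decide) with rfl | rfl
  · exact ⟨0, by rw [map_zero, Finsupp.single_zero, map_zero]⟩
  · induction w using Quot.ind with
    | _ a =>
      obtain ⟨⟨i, g⟩, hi, hg, kk, hk⟩ := a
      have hg' : g ≤ R.h i := hg
      have hk' : R.h i - g = 2 * (kk : ℚ) := hk
      have hkk0 : 0 ≤ kk := by
        by_contra hneg
        push_neg at hneg
        have : (kk : ℚ) < 0 := by exact_mod_cast hneg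
        linarith
      have hc : ((kk.toNat : ℕ) : ℚ) = (kk : ℚ) := by
        exact_mod_cast congrArg (fun z : ℤ => (z : ℚ)) (Int.toNat_of_nonneg hkk0)
      refine ⟨Pi.single (⟨i, hi⟩ : Fin R.N) ((X : F2U) ^ kk.toNat), ?_⟩
      rw [ψ_single]
      refine congrArg (fun v : R.Vertex => Module.AEval'.of R.dlin (Finsupp.single v (1 : F2)))
        (congrArg (Quot.mk R.rel) (Subtype.ext ?_))
      show (i, R.h i - 2 * ((kk.toNat : ℕ) : ℚ)) = (i, g)
      refine Prod.ext rfl ?_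
      show R.h i - 2 * ((kk.toNat : ℕ) : ℚ) = g
      rw [hc]; linarith

lemma ψ_surj : Function.Surjective R.ψ := by
  intro z
  obtain ⟨m, rfl⟩ : ∃ m, Module.AEval'.of R.dlin m = z :=
    ⟨(Module.AEval'.of R.dlin).symm z, (Module.AEval'.of R.dlin).apply_symm_apply z⟩
  induction m using Finsupp.induction with
  | zero => exact ⟨0, by rw [map_zero, map_zero]⟩
  | single_add w c f _ _ ih =>
    obtain ⟨x, hx⟩ := ih
    obtain ⟨x1, hx1⟩ := R.ψ_single_mem w c
    exact ⟨x1 + x, by rw [map_add, hx1, hx, ← map_add]⟩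

lemma support_add_X_pow (p : F2U) (k : ℕ) (hk : k ∈ p.support) :
    (p + X ^ k).support = p.support.erase k := by
  ext j
  simp only [Polynomial.mem_support_iff, Finset.mem_erase, Polynomial.coeff_add,
    Polynomial.coeff_X_pow]
  rcases eq_or_ne j k with rfl | hne
  · have hp : p.coeff j = 1 := by
      have h1 := Polynomial.mem_support_iff.mp hk
      revert h1
      generalize p.coeff j = c
      revert c; decide
    simp [hp, show (1 : F2) + 1 = 0 from by decide]
  · simp [hne]

open scoped Classical in
lemma ψ_apply_vertex (x : Fin R.N → F2U) (w : R.Vertex) :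
    ((Module.AEval'.of R.dlin).symm (R.ψ x)) w
      = ∑ i : Fin R.N, ∑ k ∈ (x i).support,
          (if R.vtx i k = w then (x i).coeff k else 0) := by
  classical
  rw [of_symm_ψ, Finsupp.finset_sum_apply]
  refine Finset.sum_congr rfl fun i _ => ?_
  rw [Polynomial.sum_def, Finsupp.finset_sum_apply]
  refine Finset.sum_congr rfl fun k _ => ?_
  rw [Finsupp.single_apply]

open scoped Classical in
lemma ker_ψ_sub : ∀ (n : ℕ) (x : Fin R.N → F2U),
    (∑ i : Fin R.N, (x i).support.card) = n → R.ψ x = 0 →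
      x ∈ LinearMap.range R.bdry := by
  intro n
  induction n using Nat.strong_induction_on with
  | _ n ih =>
  intro x hn hx
  by_cases hx0 : x = 0
  · subst hx0; exact zero_mem _
  · obtain ⟨i0, hi0⟩ : ∃ i0, x i0 ≠ 0 := by
      by_contra hcon; push_neg at hcon; exact hx0 (funext hcon)
    obtain ⟨k0, hk0⟩ : ∃ k0, k0 ∈ (x i0).support :=
      (Polynomial.support_nonempty.mpr hi0).exists_mem
    set w := R.vtx i0 k0 with hw
    have hzero : (∑ i : Fin R.N, ∑ k ∈ (x i).support,
        (if R.vtx i k = w then (x i).coeff k else 0)) = 0 := by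
      rw [← ψ_apply_vertex R, hx, map_zero]
      simp
    have hpair : ∃ i1 k1, k1 ∈ (x i1).support ∧ R.vtx i1 k1 = w ∧
        ((i1, k1) : Fin R.N × ℕ) ≠ (i0, k0) := by
      by_contra hcon
      push_neg at hcon
      have heval : (∑ i : Fin R.N, ∑ k ∈ (x i).support,
          (if R.vtx i k = w then (x i).coeff k else 0)) = (x i0).coeff k0 := by
        rw [Finset.sum_eq_single i0]
        · rw [Finset.sum_eq_single k0]
          · rw [if_pos rfl]
          · intro k hk hne
            rw [if_neg]
            intro hvk
            exact hne (congrArg Prod.snd (hcon i0 k hk hvk))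
          · intro habs; exact absurd hk0 habs
        · intro i _ hne
          refine Finset.sum_eq_zero fun k hk => ?_
          rw [if_neg]
          intro hvk
          exact hne (congrArg Prod.fst (hcon i k hk hvk))
        · intro habs; exact absurd (Finset.mem_univ i0) habs
      rw [heval] at hzero
      exact Polynomial.mem_support_iff.mp hk0 hzero
    obtain ⟨i1, k1, hk1, hvw, hne⟩ := hpair
    have hP : Pi.single i0 ((X : F2U) ^ k0) + Pi.single i1 ((X : F2U) ^ k1)
        ∈ LinearMap.range R.bdry := R.pair_mem i0 i1 k0 k1 hvw.symm
    set P : Fin R.N → F2U :=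
      Pi.single i0 ((X : F2U) ^ k0) + Pi.single i1 ((X : F2U) ^ k1) with hPdef
    obtain ⟨y0, hy0⟩ := hP
    have hψP : R.ψ P = 0 := by rw [← hy0]; exact R.ψ_bdry y0
    have hx' : R.ψ (x + P) = 0 := by rw [map_add, hx, hψP, add_zero]
    have hsz : (∑ i : Fin R.N, ((x + P) i).support.card) < n := by
      rw [← hn]
      refine Finset.sum_lt_sum (fun i _ => ?_) ⟨i0, Finset.mem_univ i0, ?_⟩
      · rcases eq_or_ne i1 i0 with hB | hA
        · subst hB
          rcases eq_or_ne i i1 with rfl | hii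
          · have hk10 : k1 ≠ k0 := fun hkk =>
              hne (by rw [hkk])
            have : (x + P) i = ((x i + X ^ k0) + X ^ k1) := by
              simp only [hPdef, Pi.add_apply, Pi.single_eq_same]
              ring
            rw [this, support_add_X_pow _ k1, support_add_X_pow _ k0 hk0]
            · exact le_trans (Finset.card_le_card (Finset.erase_subset _ _))
                (Finset.card_le_card (Finset.erase_subset _ _))
            · rw [support_add_X_pow _ k0 hk0]
              exact Finset.mem_erase.mpr ⟨hk10, hk1⟩
          · have : (x + P) i = x i := by
              simp only [hPdef, Pi.add_apply, Pi.single_eq_of_ne hii, add_zero]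
            rw [this]
        · rcases eq_or_ne i i0 with rfl | h0
          · have : (x + P) i = x i + X ^ k0 := by
              simp only [hPdef, Pi.add_apply, Pi.single_eq_same,
                Pi.single_eq_of_ne (Ne.symm hA), add_zero]
            rw [this, support_add_X_pow _ k0 hk0]
            exact Finset.card_le_card (Finset.erase_subset _ _)
          · rcases eq_or_ne i i1 with rfl | h1
            · have : (x + P) i = x i + X ^ k1 := by
                simp only [hPdef, Pi.add_apply, Pi.single_eq_same, Pi.single_eq_of_ne h0,
                  zero_add]
              rw [this, support_add_X_pow _ k1 hk1]
              exact Finset.card_le_card (Finset.erase_subset _ _)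
            · have : (x + P) i = x i := by
                simp only [hPdef, Pi.add_apply, Pi.single_eq_of_ne h0,
                  Pi.single_eq_of_ne h1, add_zero]
              rw [this]
      · rcases eq_or_ne i1 i0 with hB | hA
        · subst hB
          have hk10 : k1 ≠ k0 := fun hkk => hne (by rw [hkk])
          have : (x + P) i1 = ((x i1 + X ^ k0) + X ^ k1) := by
            simp only [hPdef, Pi.add_apply, Pi.single_eq_same]
            ring
          rw [this, support_add_X_pow _ k1, support_add_X_pow _ k0 hk0]
          · exact lt_of_le_of_lt (Finset.card_le_card (Finset.erase_subset _ _))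
              (Finset.card_erase_lt_of_mem hk0)
          · rw [support_add_X_pow _ k0 hk0]
            exact Finset.mem_erase.mpr ⟨hk10, hk1⟩
        · have : (x + P) i0 = x i0 + X ^ k0 := by
            simp only [hPdef, Pi.add_apply, Pi.single_eq_same, Pi.single_eq_of_ne (Ne.symm hA),
              add_zero]
          rw [this, support_add_X_pow _ k0 hk0]
          exact Finset.card_erase_lt_of_mem hk0
    have hrec := ih _ hsz (x + P) rfl hx'
    have hxPP : x = (x + P) + P := by
      rw [add_assoc, R.pi_add_self P, add_zero]
    rw [hxPP]
    exact add_mem hrec ⟨y0, hy0⟩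
lemma bdry_apply_coord (y : Fin (R.N - 1) → F2U) (c : Fin R.N) :
    R.bdry y c = ∑ s : Fin (R.N - 1),
      y s * (((Pi.single (⟨s.val, by have := s.isLt; omega⟩ : Fin R.N)
            ((X : F2U) ^ R.ea s.val) : Fin R.N → F2U)
        + (Pi.single (⟨s.val + 1, by have := s.isLt; omega⟩ : Fin R.N)
          ((X : F2U) ^ R.eb s.val) : Fin R.N → F2U)) c) := by
  rw [bdry, LinearMap.sum_apply, Finset.sum_apply]
  refine Finset.sum_congr rfl fun s _ => ?_
  rw [LinearMap.smulRight_apply, LinearMap.proj_apply, Pi.smul_apply, smul_eq_mul]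
  rfl

lemma bdry_ker_zero (y : Fin (R.N - 1) → F2U) (hy : R.bdry y = 0) : y = 0 := by
  suffices H : ∀ n : ℕ, ∀ t : Fin (R.N - 1), t.val = n → y t = 0 by
    funext t; exact H t.val t rfl
  intro n
  induction n using Nat.strong_induction_on with
  | _ n ihn =>
  intro t htn
  have hcN : t.val < R.N := by have := t.isLt; omega
  have hc0 : R.bdry y ⟨t.val, hcN⟩ = 0 := by rw [hy]; rfl
  rw [bdry_apply_coord] at hc0
  rw [Finset.sum_congr rfl (fun s _ => by rw [Pi.add_apply, mul_add]),
    Finset.sum_add_distrib] at hc0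
  have h1 : (∑ s : Fin (R.N - 1),
      y s * (Pi.single (⟨s.val, by have := s.isLt; omega⟩ : Fin R.N)
        ((X : F2U) ^ R.ea s.val) : Fin R.N → F2U) ⟨t.val, hcN⟩) = y t * (X : F2U) ^ R.ea t.val := by
    rw [Finset.sum_eq_single t]
    · rw [Pi.single_eq_same]
    · intro s _ hst
      rw [Pi.single_eq_of_ne, mul_zero]
      intro he
      exact hst (Fin.ext (congrArg Fin.val he).symm)
    · intro habs; exact absurd (Finset.mem_univ t) habs
  have h2 : (∑ s : Fin (R.N - 1),
      y s * (Pi.single (⟨s.val + 1, by have := s.isLt; omega⟩ : Fin R.N)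
        ((X : F2U) ^ R.eb s.val) : Fin R.N → F2U) ⟨t.val, hcN⟩) = 0 := by
    rcases Nat.eq_zero_or_eq_succ_pred n with hn0 | hnd
    · refine Finset.sum_eq_zero fun s _ => ?_
      rw [Pi.single_eq_of_ne, mul_zero]
      intro he
      rw [Fin.mk.injEq] at he
      omega
    · set d := n - 1 with hd
      have hdlt : d < R.N - 1 := by have := t.isLt; omega
      rw [Finset.sum_eq_single (⟨d, hdlt⟩ : Fin (R.N - 1))]
      · rw [ihn d (by omega) ⟨d, hdlt⟩ rfl, zero_mul]
      · intro s _ hst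
        rw [Pi.single_eq_of_ne, mul_zero]
        intro he
        rw [Fin.mk.injEq] at he
        apply hst
        exact Fin.ext (show s.val = d by omega)
      · intro habs; exact absurd (Finset.mem_univ _) habs
  rw [h1, h2, add_zero] at hc0
  rcases mul_eq_zero.mp hc0 with h | h
  · exact h
  · exact absurd h (pow_ne_zero _ Polynomial.X_ne_zero)

end GRoot

/-- Let `R` be a graded root with leaves `v₀, …, v_{N-1}` in
left-to-right order (of gradings `h i`) and angles `α₀, …, α_{N-2}` (supported at
vertices of gradings `m i`), and let `C_*(R)` be the associated standard complex over
`𝔽₂[U]`, with zero differential on even generators and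
`∂αᵢ = U^{(h i − m i)/2} vᵢ + U^{(h (i+1) − m i)/2} vᵢ₊₁`.  Then the homology of
`C_*(R)` is isomorphic, as a graded `𝔽₂[U]`-module, to the lattice homology `𝕙⁻(R)`:
there is an additive isomorphism `φ` that intertwines multiplication by `U = X` with the
vertex-lowering map (hence is `𝔽₂[U]`-linear), and sends the class of the degree-`h i`
cycle `vᵢ` to the generator of `𝕙⁻(R)` at the leaf vertex `(i, h i)` (hence is
grading-preserving). -/
theorem standard_complex_homology_is_lattice_homology (R : GRoot) :
    ∃ φ : Hmlgy R.Dstd ≃+ R.LH,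
      (∀ z : Hmlgy R.Dstd, φ ((X : F2U) • z) = Finsupp.mapDomain R.down (φ z)) ∧
      ∀ (i : Fin R.N)
        (hi : ((Pi.single i (1 : F2U), 0) :
            (Fin R.N → F2U) × (Fin (R.N - 1) → F2U)) ∈ LinearMap.ker R.Dstd),
        φ (Submodule.Quotient.mk ⟨(Pi.single i (1 : F2U), 0), hi⟩) =
          Finsupp.single
            (Quot.mk R.rel ⟨(i.val, R.h i.val), i.isLt, le_refl _, 0, by simp⟩) 1 := by
  classical
  let Q : ↥(LinearMap.ker R.Dstd) →ₗ[F2U] Module.AEval' R.dlin :=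
    R.ψ ∘ₗ (LinearMap.fst F2U _ _) ∘ₗ (LinearMap.ker R.Dstd).subtype
  have hDstd : ∀ v : (Fin R.N → F2U) × (Fin (R.N - 1) → F2U),
      R.Dstd v = (R.bdry v.2, 0) := fun v => rfl
  have hQsurj : Function.Surjective Q := by
    intro z
    obtain ⟨x, hx⟩ := R.ψ_surj z
    refine ⟨⟨(x, 0), LinearMap.mem_ker.mpr ?_⟩, hx⟩
    rw [hDstd]
    exact Prod.ext (map_zero _) rfl
  have hker : LinearMap.ker Q
      = (LinearMap.range R.Dstd).comap (LinearMap.ker R.Dstd).subtype := by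
    ext v
    obtain ⟨⟨x, y⟩, hv⟩ := v
    have hvy : R.bdry y = 0 := by
      have := LinearMap.mem_ker.mp hv
      rw [hDstd] at this
      exact congrArg Prod.fst this
    have hy0 : y = 0 := R.bdry_ker_zero y hvy
    subst hy0
    simp only [LinearMap.mem_ker, Submodule.mem_comap, Submodule.coe_subtype,
      LinearMap.mem_range]
    constructor
    · intro hQ0
      have hx : x ∈ LinearMap.range R.bdry := R.ker_ψ_sub _ (x : Fin R.N → F2U) rfl hQ0
      obtain ⟨y', hy'⟩ := hx
      exact ⟨(0, y'), by rw [hDstd]; exact Prod.ext hy' rfl⟩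
    · rintro ⟨⟨a, b⟩, hab⟩
      rw [hDstd] at hab
      have hb : R.bdry b = x := congrArg Prod.fst hab
      show R.ψ x = 0
      rw [← hb]
      exact R.ψ_bdry b
  let e1 := Submodule.quotEquivOfEq _ _ hker.symm
  let e2 := @LinearMap.quotKerEquivOfSurjective F2U (↥(LinearMap.ker R.Dstd)) (Module.AEval' R.dlin) _ _ _ _ _ Q hQsurj
  let e3 : Hmlgy R.Dstd ≃ₗ[F2U] Module.AEval' R.dlin := e1.trans e2
  let φ : Hmlgy R.Dstd ≃+ R.LH :=
    e3.toAddEquiv.trans (Module.AEval'.of R.dlin).symm.toAddEquiv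
  have hφ : ∀ z : Hmlgy R.Dstd, φ z = (Module.AEval'.of R.dlin).symm (e3 z) := fun z => rfl
  refine ⟨φ, ?_, ?_⟩
  · intro z
    rw [hφ, hφ, map_smul, Module.AEval'.of_symm_X_smul]
    show Finsupp.mapDomain R.down _ = _
    rfl
  · intro i hi
    rw [hφ]
    have he3 : e3 (Submodule.Quotient.mk ⟨(Pi.single i (1 : F2U), 0), hi⟩)
        = Q ⟨(Pi.single i (1 : F2U), 0), hi⟩ := by
      show e2 (e1 (Submodule.Quotient.mk _)) = _
      rw [Submodule.quotEquivOfEq_mk]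
      simp [e2, LinearMap.quotKerEquivOfSurjective, LinearMap.quotKerEquivRange_apply_mk]
    rw [he3]
    have hQv : Q ⟨(Pi.single i (1 : F2U), 0), hi⟩ = R.ψ (Pi.single i (1 : F2U)) := rfl
    rw [hQv, show (1 : F2U) = (X : F2U) ^ 0 from (pow_zero _).symm, R.ψ_single,
      LinearEquiv.symm_apply_apply]
    refine congrArg (fun v : R.Vertex => Finsupp.single v (1 : F2)) ?_
    refine congrArg (Quot.mk R.rel) (Subtype.ext ?_)
    show (i.val, R.h i.val - 2 * ((0 : ℕ) : ℚ)) = (i.val, R.h i.val)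
    refine Prod.ext rfl ?_
    show R.h i.val - 2 * ((0 : ℕ) : ℚ) = R.h i.val
    push_cast
    ring
end
end

section
/- For real sequences h₁ > h₂ > … > hₙ and r₁ < r₂ < … < rₙ, and any k ≥ 1, the maximum over all tuples (s₁,…,s_k) ∈ {1,…,n}^k of min_{1≤i≤k} ( Σⱼ h_{sⱼ} − h_{s_i} + r_{s_i} ) is attained on a homogeneous tuple; i.e., it equals max_{1≤s≤n} ( (k−1)h_s + r_s ). -/
/-- For real sequences `h₁ > h₂ > … > hₙ` and `r₁ < r₂ < … < rₙ`, and
any `k ≥ 1`, the maximum over all tuples `(s₁,…,s_k) ∈ {1,…,n}^k` of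
`min_{1 ≤ i ≤ k} (Σⱼ h_{sⱼ} − h_{s_i} + r_{s_i})` is attained on a homogeneous tuple;
i.e. it equals `max_{1 ≤ s ≤ n} ((k−1)·h_s + r_s)`. -/
theorem max_min_connected_sum_formula_attained_on_homogeneous_tuple
    (n k : ℕ) (hn : 0 < n) (hk : 1 ≤ k) (h r : Fin n → ℝ)
    (hh : StrictAnti h) (hr : StrictMono r) :
    (Finset.univ.sup' (Finset.univ_nonempty_iff.mpr ⟨fun _ : Fin k => (⟨0, hn⟩ : Fin n)⟩)
        fun s : Fin k → Fin n =>
          Finset.univ.inf' (Finset.univ_nonempty_iff.mpr ⟨(⟨0, by omega⟩ : Fin k)⟩)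
            fun i : Fin k => (∑ j : Fin k, h (s j)) - h (s i) + r (s i))
      = Finset.univ.sup' (Finset.univ_nonempty_iff.mpr ⟨(⟨0, hn⟩ : Fin n)⟩)
          fun s : Fin n => (k - 1 : ℝ) * h s + r s := by
  apply le_antisymm
  · apply Finset.sup'_le
    intro s _
    obtain ⟨i₀, -, hi₀⟩ := Finset.exists_min_image Finset.univ s
      (Finset.univ_nonempty_iff.mpr ⟨(⟨0, by omega⟩ : Fin k)⟩)
    refine le_trans (Finset.inf'_le _ (Finset.mem_univ i₀)) ?_
    refine le_trans ?_ (Finset.le_sup' _ (Finset.mem_univ (s i₀)))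
    have hsum : (∑ j : Fin k, h (s j)) ≤ ∑ _j : Fin k, h (s i₀) := by
      apply Finset.sum_le_sum
      intro j _
      exact hh.antitone (hi₀ j (Finset.mem_univ j))
    have : (∑ _j : Fin k, h (s i₀)) = (k : ℝ) * h (s i₀) := by
      simp [Finset.sum_const, Finset.card_univ]
    nlinarith [hsum]
  · apply Finset.sup'_le
    intro t _
    refine le_trans ?_ (Finset.le_sup' _ (Finset.mem_univ (fun _ : Fin k => t)))
    apply Finset.le_inf'
    intro i _
    have : (∑ _j : Fin k, h t) = (k : ℝ) * h t := by
      simp [Finset.sum_const, Finset.card_univ]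
    rw [this]
    ring_nf
    linarith
end

section
/- Let R be a graded root and let γ_i denote the path from leaf v_i down the infinite stem. If U^a v_i and U^b v_j are homologous cycles in the standard complex C_*(R) (with i < j), then the paths γ_i and γ_j coincide at the common grading of these two cycles; consequently the map sending the class of Uⁿv_i to the vertex on γ_i at distance n from v_i is well defined on homology. -/
open Polynomial

noncomputable section

section Aux

open Polynomial

private lemma floor_half_eq {x y : ℚ} (hlt : y < x) (hpar : ∃ k : ℤ, x - y = 2 * k) :
    2 * (((⌊(x - y) / 2⌋).toNat : ℕ) : ℚ) = x - y := by
  obtain ⟨z, hz⟩ := hpar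
  have hz0 : (0 : ℤ) ≤ z := by
    have h2 : (0 : ℚ) < 2 * (z : ℚ) := by rw [← hz]; linarith
    have : (0 : ℚ) < (z : ℚ) := by linarith
    exact_mod_cast this.le
  have hfloor : ⌊(x - y) / 2⌋ = z := by
    rw [hz, show (2 : ℚ) * (z : ℚ) / 2 = (z : ℚ) by ring, Int.floor_intCast]
  rw [hfloor, hz]
  have : ((z.toNat : ℕ) : ℚ) = (z : ℚ) := by exact_mod_cast congrArg (Int.cast : ℤ → ℚ) (Int.toNat_of_nonneg hz0)
  rw [this]

private lemma eq_mono {u : F2U} {e t : ℕ} (h : u * X ^ e = X ^ t) :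
    ∃ d : ℕ, e + d = t ∧ u = X ^ d := by
  have hx : (X : F2U) ^ e ≠ 0 := pow_ne_zero _ X_ne_zero
  have hu : u ≠ 0 := by
    rintro rfl
    rw [zero_mul] at h
    exact (pow_ne_zero t (X_ne_zero (R := ZMod 2))) h.symm
  have hdeg : u.natDegree + e = t := by
    have := congrArg natDegree h
    rwa [natDegree_mul hu hx, natDegree_X_pow, natDegree_X_pow] at this
  refine ⟨t - e, by omega, ?_⟩
  apply mul_right_cancel₀ hx
  rw [h, ← pow_add]
  congr 1
  omega

namespace GRoot

variable (R : GRoot)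

private lemma bdry_coord (c : Fin (R.N - 1) → F2U) (l : ℕ) (hl : l + 1 < R.N) :
    R.bdry c ⟨l, by omega⟩ =
      c ⟨l, by omega⟩ * X ^ (⌊(R.h l - R.m l) / 2⌋).toNat
      + (if h0 : 0 < l then
          c ⟨l - 1, by omega⟩ * X ^ (⌊(R.h l - R.m (l - 1)) / 2⌋).toNat else 0) := by
  simp only [bdry, LinearMap.sum_apply, Finset.sum_apply, LinearMap.smulRight_apply,
    LinearMap.proj_apply, Pi.add_apply, Pi.smul_apply, smul_eq_mul, Pi.single_apply,
    Fin.mk.injEq, mul_add, mul_ite, mul_one, mul_zero]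
  rw [Finset.sum_add_distrib]
  congr 1
  · rw [Finset.sum_eq_single (⟨l, by omega⟩ : Fin (R.N - 1))]
    · simp
    · intro k _ hk
      have hk' : (k : ℕ) ≠ l := fun h => hk (Fin.ext (by simpa using h))
      rw [if_neg (by omega)]
    · intro h
      exact absurd (Finset.mem_univ _) h
  · by_cases h0 : 0 < l
    · rw [dif_pos h0, Finset.sum_eq_single (⟨l - 1, by omega⟩ : Fin (R.N - 1))]
      · simp only [Fin.val_mk]
        rw [if_pos (by omega), show l - 1 + 1 = l from by omega]
      · intro k _ hk
        have hk' : (k : ℕ) ≠ l - 1 := fun h => hk (Fin.ext (by simpa using h))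
        rw [if_neg (by omega)]
      · intro h
        exact absurd (Finset.mem_univ _) h
    · rw [dif_neg h0]
      apply Finset.sum_eq_zero
      intro k _
      rw [if_neg (by omega)]

private lemma Eval (k : ℕ) (hk : k + 1 < R.N) :
    2 * (((⌊(R.h k - R.m k) / 2⌋).toNat : ℕ) : ℚ) = R.h k - R.m k :=
  floor_half_eq (R.hm k hk).1 (R.par k hk).1

private lemma Fval (k : ℕ) (hk : k + 1 < R.N) :
    2 * (((⌊(R.h (k + 1) - R.m k) / 2⌋).toNat : ℕ) : ℚ) = R.h (k + 1) - R.m k :=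
  floor_half_eq (R.hm k hk).2 (R.par k hk).2

end GRoot

end Aux

/-- Let `R` be a graded root with paths `γ_i` from each leaf `v_i` down
the infinite stem.  If `U^a v_i` and `U^b v_j` are homologous cycles in the standard
complex `C_*(R)` (with `i < j`), then the paths `γ_i` and `γ_j` coincide at the common
grading `h i − 2a = h j − 2b` of these cycles, i.e. that grading is at most every angle
grading `m k` for `i ≤ k < j`; consequently, the vertex on `γ_i` at grading `h i − 2a`
equals the vertex on `γ_j` at grading `h j − 2b`, so the map sending the class of
`U^n v_i` to the vertex on `γ_i` at distance `n` from `v_i` is well defined on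
homology. -/
theorem homologous_cycles_give_merged_paths (R : GRoot)
    (i j : ℕ) (hi : i < R.N) (hj : j < R.N) (hij : i < j)
    (a b : ℕ) (hg : R.h i - 2 * (a : ℚ) = R.h j - 2 * (b : ℚ))
    (hcarrier_i : ((i, R.h i - 2 * (a : ℚ)) : ℕ × ℚ) ∈
      {p : ℕ × ℚ | p.1 < R.N ∧ p.2 ≤ R.h p.1 ∧ ∃ k : ℤ, R.h p.1 - p.2 = 2 * k})
    (hcarrier_j : ((j, R.h j - 2 * (b : ℚ)) : ℕ × ℚ) ∈
      {p : ℕ × ℚ | p.1 < R.N ∧ p.2 ≤ R.h p.1 ∧ ∃ k : ℤ, R.h p.1 - p.2 = 2 * k})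
    (hom : (X : F2U) ^ a • (Pi.single (⟨i, hi⟩ : Fin R.N) (1 : F2U) : Fin R.N → F2U)
          + (X : F2U) ^ b • (Pi.single (⟨j, hj⟩ : Fin R.N) (1 : F2U) : Fin R.N → F2U)
        ∈ LinearMap.range R.bdry) :
    (∀ k : ℕ, i ≤ k → k < j → R.h i - 2 * (a : ℚ) ≤ R.m k) ∧
    Quot.mk R.rel (⟨(i, R.h i - 2 * (a : ℚ)), hcarrier_i⟩ : R.Carrier)
      = Quot.mk R.rel (⟨(j, R.h j - 2 * (b : ℚ)), hcarrier_j⟩ : R.Carrier) := by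
  obtain ⟨c, hc⟩ := hom
  have eqn : ∀ l : ℕ, ∀ _ : l + 1 < R.N,
      c ⟨l, by omega⟩ * X ^ (⌊(R.h l - R.m l) / 2⌋).toNat
        + (if h0 : 0 < l then
            c ⟨l - 1, by omega⟩ * X ^ (⌊(R.h l - R.m (l - 1)) / 2⌋).toNat else 0)
      = (if l = i then X ^ a else if l = j then X ^ b else 0) := by
    intro l hl
    have h1 := congrFun hc ⟨l, by omega⟩
    rw [R.bdry_coord c l hl] at h1
    rw [h1]
    simp only [Pi.add_apply, Pi.smul_apply, Pi.single_apply, smul_eq_mul, Fin.mk.injEq,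
      mul_ite, mul_one, mul_zero]
    split_ifs <;> simp_all
  have zero : ∀ l : ℕ, ∀ _ : l < i, c ⟨l, by omega⟩ = 0 := by
    intro l
    induction l using Nat.strong_induction_on with
    | _ l ih =>
      intro hl
      have e := eqn l (by omega)
      rw [if_neg (by omega), if_neg (by omega)] at e
      by_cases h0 : 0 < l
      · rw [dif_pos h0, ih (l - 1) (by omega) (by omega), zero_mul, add_zero] at e
        exact (mul_eq_zero.mp e).resolve_right (pow_ne_zero _ X_ne_zero)
      · rw [dif_neg h0, add_zero] at e
        exact (mul_eq_zero.mp e).resolve_right (pow_ne_zero _ X_ne_zero)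
  have key : ∀ k : ℕ, ∀ _ : i ≤ k, ∀ _ : k < j,
      ∃ d : ℕ, c ⟨k, by omega⟩ = X ^ d ∧
        R.m k - 2 * (d : ℚ) = R.h i - 2 * (a : ℚ) := by
    intro k hk
    induction k, hk using Nat.le_induction with
    | base =>
      intro hij'
      have e := eqn i (by omega)
      rw [if_pos rfl] at e
      have hz : (if h0 : 0 < i then
          c ⟨i - 1, by omega⟩ * X ^ (⌊(R.h i - R.m (i - 1)) / 2⌋).toNat else 0) = 0 := by
        by_cases h0 : 0 < i
        · rw [dif_pos h0, zero (i - 1) (by omega), zero_mul]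
        · rw [dif_neg h0]
      rw [hz, add_zero] at e
      obtain ⟨d, hd1, hd2⟩ := eq_mono e
      refine ⟨d, hd2, ?_⟩
      have hE := R.Eval i (by omega)
      have hd1' : ((⌊(R.h i - R.m i) / 2⌋).toNat : ℚ) + (d : ℚ) = (a : ℚ) := by
        exact_mod_cast congrArg (Nat.cast (R := ℚ)) hd1
      linarith
    | succ n hn ih =>
      intro hn1
      obtain ⟨d, hcd, hmd⟩ := ih (by omega)
      have e := eqn (n + 1) (by omega)
      rw [if_neg (by omega), if_neg (by omega), dif_pos (Nat.succ_pos n)] at e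
      simp only [Nat.add_sub_cancel] at e
      have e2 : c ⟨n + 1, by omega⟩ * X ^ (⌊(R.h (n + 1) - R.m (n + 1)) / 2⌋).toNat
          = X ^ (d + (⌊(R.h (n + 1) - R.m n) / 2⌋).toNat) := by
        have := eq_neg_of_add_eq_zero_left e
        rw [CharTwo.neg_eq (R := F2U)] at this
        rw [this, hcd, ← pow_add]
      obtain ⟨d', hd1, hd2⟩ := eq_mono e2
      refine ⟨d', hd2, ?_⟩
      have hE := R.Eval (n + 1) (by omega)
      have hF := R.Fval n (by omega)
      have hd1' : ((⌊(R.h (n + 1) - R.m (n + 1)) / 2⌋).toNat : ℚ) + (d' : ℚ)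
          = (d : ℚ) + ((⌊(R.h (n + 1) - R.m n) / 2⌋).toNat : ℚ) := by
        exact_mod_cast congrArg (Nat.cast (R := ℚ)) hd1
      linarith
  have H1 : ∀ k : ℕ, i ≤ k → k < j → R.h i - 2 * (a : ℚ) ≤ R.m k := by
    intro k hk1 hk2
    obtain ⟨d, _, hd⟩ := key k hk1 hk2
    have : (0 : ℚ) ≤ (d : ℚ) := Nat.cast_nonneg d
    linarith
  refine ⟨H1, Quot.sound ⟨hg, ?_⟩⟩
  intro k hk1 hk2
  change min i j ≤ k at hk1
  change k < max i j at hk2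
  rw [Nat.min_eq_left hij.le] at hk1
  rw [Nat.max_eq_right hij.le] at hk2
  exact H1 k hk1 hk2
end
end
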